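/- Let G be a group and let a, b be elements of G satisfying the braid relation a*b*a = b*a*b and the relation a^2 = b*a^2*b. Then b^2 = a*b^2*a. -/
import Mathlib


theorem stmt_0 {G : Type*} [Group G] (a b : G)
    (hbraid : a * b * a = b * a * b) (hrel : a ^ 2 = b * a ^ 2 * b) :
    b ^ 2 = a * b ^ 2 * a := by
  have key : b ^ 2 * (a * b) = (a * b) * a ^ 2 := by
    calc b ^ 2 * (a * b) = b * (b * a * b) := by
          simp [pow_two, mul_assoc]
    _ = b * (a * b * a) := by rw [hbraid]
    _ = (b * a * b) * a := by simp [mul_assoc]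
    _ = (a * b * a) * a := by rw [hbraid]
    _ = (a * b) * a ^ 2 := by simp [pow_two, mul_assoc]
  calc b ^ 2 = (a * b) * a ^ 2 * (a * b)⁻¹ := by rw [← key]; group
  _ = (a * b) * (b * a ^ 2 * b) * (a * b)⁻¹ := by rw [← hrel]
  _ = a * b ^ 2 * a := by simp [pow_two, mul_assoc]
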